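/- For q ≥ 6, the ℤ_q-linear code C_0 of length 3 generated by {(1,1,1),(0,1,3)} has asymmetric distance at least 2: for all distinct codewords x, y (with representatives in {0,...,q-1}^3), Δ(x,y) ≥ 2. -/

import Mathlib

/-!
Every codeword `c` satisfies the parity check `2 c₀ - 3 c₁ + c₂ = 0`, so for codewords `x ≠ y` the
integer `2 d₀ - 3 d₁ + d₂`, where `d` is the difference of their lifts, is divisible by `q`.
If `Δ(x, y) ≤ 1`, then `d` has at most one entry `1`, at most one entry `-1` and zeros elsewhere;
as the weights `2, -3, 1` are distinct and nonzero, that integer is then nonzero and of absolute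
value at most `5 < q`, which is impossible.
-/

def asymN {n : ℕ} (x y : Fin n → ℤ) : ℤ := ∑ i, max (y i - x i) 0

def asymDelta {n : ℕ} (x y : Fin n → ℤ) : ℤ := max (asymN x y) (asymN y x)

def liftWord {q n : ℕ} (c : Fin n → ZMod q) : Fin n → ℤ := fun i => ((c i).val : ℤ)

def codeCheck {R : Type*} [CommRing R] (c : Fin 3 → R) : R := 2 * c 0 - 3 * c 1 + c 2

theorem codeCheck_eq_zero_of_mem_span {R : Type*} [CommRing R] {c : Fin 3 → R}
    (hc : c ∈ Submodule.span R ({![1, 1, 1], ![0, 1, 3]} : Set (Fin 3 → R))) :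
    codeCheck c = 0 := by
  obtain ⟨a, b, rfl⟩ := Submodule.mem_span_pair.mp hc
  simp [codeCheck]
  ring

section AsymDeltaLeOne

variable {x y : Fin 3 → ℤ}

theorem abs_codeCheck_sub_le_five (h : asymDelta x y ≤ 1) : |codeCheck (y - x)| ≤ 5 := by
  simp only [asymDelta, asymN, max_le_iff, Fin.sum_univ_three] at h
  simp only [codeCheck, Pi.sub_apply, abs_le]
  omega

theorem codeCheck_sub_ne_zero (h : asymDelta x y ≤ 1) (hne : x ≠ y) : codeCheck (y - x) ≠ 0 := by
  simp only [asymDelta, asymN, max_le_iff, Fin.sum_univ_three] at h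
  have hcoord : x 0 ≠ y 0 ∨ x 1 ≠ y 1 ∨ x 2 ≠ y 2 := by
    contrapose! hne
    ext i
    fin_cases i <;> simp [hne]
  simp only [codeCheck, Pi.sub_apply]
  omega

end AsymDeltaLeOne

section LiftWord

variable {q n : ℕ} [NeZero q]

theorem liftWord_injective : Function.Injective (liftWord : (Fin n → ZMod q) → Fin n → ℤ) :=
  fun _ _ h => funext fun i => ZMod.val_injective q (Int.natCast_inj.mp (congrFun h i))

theorem intCast_liftWord (c : Fin n → ZMod q) (i : Fin n) : (liftWord c i : ZMod q) = c i := by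
  simp [liftWord]

theorem intCast_codeCheck_liftWord_sub (x y : Fin 3 → ZMod q) :
    ((codeCheck (liftWord y - liftWord x) : ℤ) : ZMod q) = codeCheck y - codeCheck x := by
  simp only [codeCheck, Pi.sub_apply]
  push_cast
  simp only [intCast_liftWord]
  ring

end LiftWord

theorem stmt_11 (q : ℕ) (hq : 6 ≤ q) :
    ∀ x ∈ Submodule.span (ZMod q) ({![1,1,1], ![0,1,3]} : Set (Fin 3 → ZMod q)),
    ∀ y ∈ Submodule.span (ZMod q) ({![1,1,1], ![0,1,3]} : Set (Fin 3 → ZMod q)),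
      x ≠ y → 2 ≤ asymDelta (liftWord x) (liftWord y) := by
  intro x hx y hy hne
  have : NeZero q := ⟨by omega⟩
  by_contra! hlt
  have hsmall : asymDelta (liftWord x) (liftWord y) ≤ 1 := by omega
  have hdvd : (q : ℤ) ∣ codeCheck (liftWord y - liftWord x) := by
    rw [← ZMod.intCast_zmod_eq_zero_iff_dvd, intCast_codeCheck_liftWord_sub,
      codeCheck_eq_zero_of_mem_span hx, codeCheck_eq_zero_of_mem_span hy, sub_zero]
  have hlt_q : |codeCheck (liftWord y - liftWord x)| < q := by
    have := abs_codeCheck_sub_le_five hsmall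
    omega
  exact codeCheck_sub_ne_zero hsmall (liftWord_injective.ne hne)
    (Int.eq_zero_of_abs_lt_dvd hdvd hlt_q)
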